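/- arXiv:2501.13869 — 3 statements merged into one kernel-verified Lean document; each statement's English description precedes it below -/
import Mathlib

section
/- Let μ be a Radon measure on ℝ^{n+1}, z ∈ supp μ, 0 < r. Define b_{z,r} = ((k+2)/(2ω_k r^{k+2})) ∫_{B(z,r)} (r² − |y−z|²)(y−z) dμ(y). Suppose there are constants C, C' > 0 such that |⟨2b_{z,r}, x−z⟩ + Q_{z,r}(x−z) − |x−z|²| ≤ C|x−z|³/r for all x ∈ supp μ ∩ B(z, r/2), where Q_{z,r}(v) ≤ C'|v|² for all v. Suppose moreover that supp μ near z is a C¹ k-dimensional graph through z with tangent space T at z. Then b_{z,r} is orthogonal to T (or b_{z,r} = 0). -/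
open MeasureTheory Metric Set Filter Module
open scoped RealInnerProductSpace Topology ENNReal

noncomputable section

/-- `ℝ^{n+1}` as a Euclidean space. -/
abbrev Eu (n : ℕ) := EuclideanSpace ℝ (Fin (n + 1))

/-- `ω_k`: the Lebesgue measure of the unit ball in `ℝ^k`. -/
def unitBallVol (k : ℕ) : ℝ := (volume (ball (0 : EuclideanSpace ℝ (Fin k)) 1)).toReal

/-- The (topological) support of a measure on a metric space. -/
def msupp {X : Type*} [MetricSpace X] [MeasurableSpace X] (μ : Measure X) : Set X :=
  {x | ∀ r : ℝ, 0 < r → 0 < μ (ball x r)}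

/-- `μ` is locally `k`-uniform: `μ(B(x,r)) = ω_k r^k` for `x ∈ supp μ`, `0 < r ≤ 1`. -/
def LocUniform (n k : ℕ) (μ : Measure (Eu n)) : Prop :=
  ∀ x ∈ msupp μ, ∀ r : ℝ, 0 < r → r ≤ 1 →
    μ (ball x r) = ENNReal.ofReal (unitBallVol k * r ^ k)

/-- `μ` is locally uniformly distributed. -/
def LocUnifDist (n : ℕ) (μ : Measure (Eu n)) : Prop :=
  ∀ x ∈ msupp μ, ∀ y ∈ msupp μ, ∀ r : ℝ, 0 < r → r ≤ 1 →
    0 < μ (ball x r) ∧ μ (ball x r) = μ (ball y r) ∧ μ (ball x r) < ⊤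

/-- The graph map of `φ` over `ℝ^k × {0}^{n+1-k}`: `x' ↦ (x', φ(x'))`. -/
def graphMap (n k : ℕ) (φ : Fin (n + 1) → EuclideanSpace ℝ (Fin k) → ℝ) :
    EuclideanSpace ℝ (Fin k) → Eu n := fun x' =>
  (EuclideanSpace.equiv (Fin (n + 1)) ℝ).symm
    (fun j => if h : (j : ℕ) < k then x' ⟨j, h⟩ else φ j x')

/-- The Laplacian of a scalar function at `0`. -/
def lap0 (k : ℕ) (f : EuclideanSpace ℝ (Fin k) → ℝ) : ℝ :=
  ∑ i : Fin k, fderiv ℝ (fun x => fderiv ℝ f x (EuclideanSpace.single i 1)) 0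
    (EuclideanSpace.single i 1)

/-! The hypothesis gives `⟪2b, x - z⟫ ≥ -K ‖x - z‖²` on `supp μ` near `z`, so
`x ↦ ⟪2b, x - z⟫ + K ‖x - z‖²` has a local minimum at `z` on `supp μ`, with derivative
`⟪2b, ·⟫`. Near `z`, `supp μ` is the image of a map whose derivative is the inclusion of `T`,
so `T` lies in the positive tangent cone of `supp μ` at `z`; Fermat's rule along `u` and `-u`
gives `⟪b, u⟫ = 0` for `u ∈ T`. -/

section TangentCone

variable {E F : Type*} [NormedAddCommGroup E] [NormedSpace ℝ E] [NormedAddCommGroup F]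
  [NormedSpace ℝ F]

theorem HasFDerivWithinAt.mapsTo_posTangentConeAt {f : E → F} {f' : E →L[ℝ] F} {s : Set E}
    {x : E} (h : HasFDerivWithinAt f f' s x) :
    MapsTo f' (posTangentConeAt s x) (posTangentConeAt (f '' s) (f x)) := by
  intro y hy
  obtain ⟨α, l, hl, c, d, hd₀, hds, hcd⟩ := exists_fun_of_mem_tangentConeAt hy
  refine mem_tangentConeAt_of_seq l c (fun n ↦ f (x + d n) - f x) ?_ ?_ (h.lim hd₀ hds hcd)
  · rw [tendsto_sub_nhds_zero_iff]
    refine h.continuousWithinAt.tendsto.comp (tendsto_nhdsWithin_iff.mpr ⟨?_, hds⟩)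
    simpa using tendsto_const_nhds.add hd₀
  · exact hds.mono fun n hn ↦ ⟨x + d n, hn, by simp⟩

theorem HasFDerivAt.apply_mem_posTangentConeAt_range {f : E → F} {f' : E →L[ℝ] F} {x : E}
    (h : HasFDerivAt f f' x) (v : E) : f' v ∈ posTangentConeAt (range f) (f x) := by
  rw [← image_univ]
  exact h.hasFDerivWithinAt.mapsTo_posTangentConeAt (by simp)

theorem Submodule.subset_posTangentConeAt_of_graph {T : Submodule ℝ E} {ψ : T → E}
    (hψ : HasFDerivAt ψ (0 : T →L[ℝ] E) 0) (hψ0 : ψ 0 = 0) {z : E} {s U : Set E}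
    (hU : U ∈ 𝓝 z) (hs : {x | ∃ t : T, x = z + t + ψ t} ∩ U ⊆ s) :
    (T : Set E) ⊆ posTangentConeAt s z := by
  intro u hu
  have hΦ : HasFDerivAt (fun t : T ↦ z + t + ψ t) T.subtypeL 0 := by
    have := (T.subtypeL.hasFDerivAt.const_add z).add hψ
    rwa [add_zero] at this
  have hu' := hΦ.apply_mem_posTangentConeAt_range ⟨u, hu⟩
  simp only [hψ0, Submodule.coe_zero, add_zero, Submodule.subtypeL_apply] at hu'
  refine posTangentConeAt_mono ?_ ((tangentConeAt_inter_nhds hU).superset hu')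
  rintro _ ⟨⟨t, rfl⟩, hxU⟩
  exact hs ⟨⟨t, rfl⟩, hxU⟩

end TangentCone

section InnerProductSpace

variable {E : Type*} [NormedAddCommGroup E] [InnerProductSpace ℝ E]

theorem inner_nonneg_of_mem_posTangentConeAt {s : Set E} {z a y : E} (K : ℝ)
    (hlow : ∀ᶠ x in 𝓝[s] z, -(K * ‖x - z‖ ^ 2) ≤ ⟪a, x - z⟫)
    (hy : y ∈ posTangentConeAt s z) : 0 ≤ ⟪a, y⟫ := by
  have hmin : IsLocalMinOn (fun x ↦ ⟪a, x - z⟫ + K * ‖x - z‖ ^ 2) s z := by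
    filter_upwards [hlow] with x hx
    simp only [sub_self, inner_zero_right, norm_zero]
    linarith
  have hlin : HasFDerivAt (fun x ↦ ⟪a, x - z⟫) (innerSL ℝ a) z := by
    simpa [inner_sub_right] using (innerSL ℝ a).hasFDerivAt.sub_const ⟪a, z⟫
  have hquad : HasFDerivAt (fun x ↦ K * ‖x - z‖ ^ 2) (0 : E →L[ℝ] ℝ) z := by
    simpa using ((hasFDerivAt_id z).sub_const z).norm_sq.const_mul K
  have hderiv := hlin.add hquad
  rw [add_zero] at hderiv
  simpa using hmin.hasFDerivWithinAt_nonneg hderiv.hasFDerivWithinAt hy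

theorem inner_eq_zero_of_mem_posTangentConeAt {s : Set E} {z a y : E} (K : ℝ)
    (hlow : ∀ᶠ x in 𝓝[s] z, -(K * ‖x - z‖ ^ 2) ≤ ⟪a, x - z⟫)
    (hy : y ∈ posTangentConeAt s z) (hy' : -y ∈ posTangentConeAt s z) : ⟪a, y⟫ = 0 :=
  le_antisymm (by simpa using inner_nonneg_of_mem_posTangentConeAt K hlow hy')
    (inner_nonneg_of_mem_posTangentConeAt K hlow hy)

theorem eventually_neg_mul_norm_sq_le_inner {s : Set E} {z a : E} {Q : E → ℝ} {r C C' : ℝ}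
    (hr : 0 < r) (hC : 0 ≤ C) (hQ : ∀ v, Q v ≤ C' * ‖v‖ ^ 2)
    (happrox : ∀ x ∈ s ∩ ball z (r / 2),
      |⟪a, x - z⟫ + Q (x - z) - ‖x - z‖ ^ 2| ≤ C * ‖x - z‖ ^ 3 / r) :
    ∀ᶠ x in 𝓝[s] z, -((C' - 1 + C / 2) * ‖x - z‖ ^ 2) ≤ ⟪a, x - z⟫ := by
  filter_upwards [inter_mem_nhdsWithin _ (ball_mem_nhds z (half_pos hr))] with x hx
  have hN : ‖x - z‖ < r / 2 := mem_ball_iff_norm.mp hx.2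
  have hcube : C * ‖x - z‖ ^ 3 / r ≤ C / 2 * ‖x - z‖ ^ 2 := by
    rw [div_le_iff₀ hr]
    nlinarith [norm_nonneg (x - z),
      mul_le_mul_of_nonneg_left hN.le (mul_nonneg hC (sq_nonneg ‖x - z‖))]
  linarith [(abs_le.mp (happrox x hx)).1, hQ (x - z)]

end InnerProductSpace

theorem stmt2_general (n : ℕ) (μ : Measure (Eu n))
    (z : Eu n) (r C C' : ℝ) (hr : 0 < r) (hC : 0 < C)
    (b : Eu n) (Q : Eu n → ℝ)
    (hQbound : ∀ v, Q v ≤ C' * ‖v‖ ^ 2)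
    (hineq : ∀ x ∈ msupp μ ∩ ball z (r / 2),
        |⟪2 • b, x - z⟫ + Q (x - z) - ‖x - z‖ ^ 2| ≤ C * ‖x - z‖ ^ 3 / r)
    (T : Submodule ℝ (Eu n))
    (r₁ : ℝ) (hr₁ : 0 < r₁) (ψ : T → Eu n) (hψC1 : ContDiff ℝ 1 ψ)
    (hψ0 : ψ 0 = 0) (hψd : fderiv ℝ ψ 0 = 0)
    (hgraph : msupp μ ∩ ball z r₁ = {x | ∃ t : T, x = z + (t : Eu n) + ψ t} ∩ ball z r₁) :
    b ∈ Tᗮ := by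
  have hlow := eventually_neg_mul_norm_sq_le_inner hr hC.le hQbound hineq
  have hψ : HasFDerivAt ψ 0 0 := hψd ▸ (hψC1.differentiable one_ne_zero 0).hasFDerivAt
  have hcone : (T : Set (Eu n)) ⊆ posTangentConeAt (msupp μ) z :=
    T.subset_posTangentConeAt_of_graph hψ hψ0 (ball_mem_nhds z hr₁)
      (hgraph.symm.subset.trans inter_subset_left)
  rw [Submodule.mem_orthogonal]
  intro u hu
  have h2b :=
    inner_eq_zero_of_mem_posTangentConeAt _ hlow (hcone hu) (hcone (T.neg_mem hu))
  rw [two_smul, inner_add_left] at h2b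
  rw [real_inner_comm]
  linarith

/-- the vector `b_{z,r}` is orthogonal to the tangent plane. -/
theorem stmt2 (n k : ℕ) (μ : Measure (Eu n)) [IsLocallyFiniteMeasure μ]
    (z : Eu n) (hz : z ∈ msupp μ) (r C C' : ℝ) (hr : 0 < r) (hC : 0 < C) (hC' : 0 < C')
    (b : Eu n) (Q : Eu n → ℝ)
    (hb : b = (((k : ℝ) + 2) / (2 * unitBallVol k * r ^ (k + 2))) •
        ∫ y in ball z r, (r ^ 2 - ‖y - z‖ ^ 2) • (y - z) ∂μ)
    (hQ : ∀ x, Q x = (((k : ℝ) + 2) / (unitBallVol k * r ^ (k + 2))) *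
        ∫ y in ball z r, ⟪x, y - z⟫ ^ 2 ∂μ)
    (hQbound : ∀ v, Q v ≤ C' * ‖v‖ ^ 2)
    (hineq : ∀ x ∈ msupp μ ∩ ball z (r / 2),
        |⟪2 • b, x - z⟫ + Q (x - z) - ‖x - z‖ ^ 2| ≤ C * ‖x - z‖ ^ 3 / r)
    (T : Submodule ℝ (Eu n)) (hT : finrank ℝ T = k)
    (r₁ : ℝ) (hr₁ : 0 < r₁) (ψ : T → Eu n) (hψC1 : ContDiff ℝ 1 ψ)
    (hψ0 : ψ 0 = 0) (hψd : fderiv ℝ ψ 0 = 0) (hψperp : ∀ t, ψ t ∈ Tᗮ)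
    (hgraph : msupp μ ∩ ball z r₁ = {x | ∃ t : T, x = z + (t : Eu n) + ψ t} ∩ ball z r₁) :
    b ∈ Tᗮ :=
  stmt2_general n μ z r C C' hr hC b Q hQbound hineq T r₁ hr₁ ψ hψC1 hψ0 hψd hgraph
end
end

section
/- Let μ be a locally k-uniform measure in ℝ^{n+1}, 0 ∈ supp μ, 0 < r < 1/2, with supp μ ∩ B(0,r₀) the graph of a C² function φ : ℝ^k → ℝ^{n+1−k}, φ(0) = 0, ∇φ_j(0) = 0. Then for every unit vector e ∈ S^{k−1} × {0}^{n+1−k}: Σ_{j=k+1}^{n+1} b_{0,r}^j ⟨∇²φ_j(0) e, e⟩ = 1 − Q_{0,r}(e), where b_{0,r} = ((k+2)/(2ω_k r^{k+2})) ∫_{B(0,r)} (r² − |y|²) y dμ(y) and Q_{0,r}(x) = ((k+2)/(ω_k r^{k+2})) ∫_{B(0,r)} ⟨x, y⟩² dμ(y). -/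
open MeasureTheory Metric Set Filter Module
open scoped RealInnerProductSpace Topology ENNReal

noncomputable section

/-
Write `b = ∫_{B(0,r)} (r² - |y|²) y dμ`, `Q(x) = ∫_{B(0,r)} ⟨x, y⟩² dμ` and
`M = ∫_{B(0,r)} (r² - |y|²) dμ = 2 ω_k r^{k+2} / (k+2)` (the paper's `b_{0,r}`, `Q_{0,r}` without
their normalising factor).

By the layer-cake formula, `∫ (r² - |y - x|²)₊² dμ(y)` only involves the measures of balls centred
at `x`, so it is the same for every `x ∈ supp μ`. Expanding
`r² - |y - x|² = (r² - |y|²) + (2⟨x, y⟩ - |x|²)` to second order, the error is supported in the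
shell `|r² - |y|²| ≤ 3|x|`, of measure `O(|x|)`, which gives `⟨b, x⟩ + Q(x) - M|x|²/2 = O(|x|³)` on
`supp μ`. The curve `ε ↦ (εe', φ(εe'))` lies in `supp μ` and equals `εe + ε²w + o(ε²)` with
`w_j = ⟨∇²φ_j(0)e', e'⟩/2`; the terms of order `ε` and `ε²` give `⟨b, e⟩ = 0` and
`⟨b, w⟩ + Q(e) - M/2 = 0`, and the latter is the identity.
-/

theorem Continuous.integrableOn_ball {X E : Type*} [MetricSpace X] [ProperSpace X]
    [MeasurableSpace X] [BorelSpace X] [NormedAddCommGroup E] {μ : Measure X}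
    [IsLocallyFiniteMeasure μ] {f : X → E} (hf : Continuous f) (x : X) (r : ℝ) :
    IntegrableOn f (ball x r) μ :=
  (hf.locallyIntegrable.integrableOn_isCompact (isCompact_closedBall x r)).mono_set
    ball_subset_closedBall

theorem EuclideanSpace.integral_apply {ι α : Type*} [Fintype ι] [MeasurableSpace α]
    {μ : Measure α} {f : α → EuclideanSpace ℝ ι} (hf : Integrable f μ) (j : ι) :
    (∫ a, f a ∂μ) j = ∫ a, f a j ∂μ :=
  ((EuclideanSpace.proj j : EuclideanSpace ℝ ι →L[ℝ] ℝ).integral_comp_comm hf).symm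

theorem EuclideanSpace.inner_equiv_symm_ite {ι : Type*} [Fintype ι] (p : ι → Prop)
    [DecidablePred p] (b : EuclideanSpace ℝ ι) (f : ι → ℝ) :
    ⟪b, (EuclideanSpace.equiv ι ℝ).symm fun j => if p j then f j else 0⟫
      = ∑ j ∈ Finset.univ.filter p, b j * f j := by
  simp [PiLp.inner_apply, Finset.sum_filter, mul_comm]

theorem continuous_setIntegral_inner_sq {E : Type*} [NormedAddCommGroup E]
    [InnerProductSpace ℝ E] [ProperSpace E] [MeasurableSpace E] [BorelSpace E] {μ : Measure E}
    [IsLocallyFiniteMeasure μ] (a : E) (r : ℝ) :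
    Continuous fun x => ∫ y in ball a r, ⟪x, y⟫ ^ 2 ∂μ := by
  have h := continuous_parametric_integral_of_continuous (μ := μ.restrict (ball a r))
    (f := fun x y : E => ⟪x, y⟫ ^ 2) (by fun_prop) (isCompact_closedBall a r)
  rwa [Measure.restrict_restrict measurableSet_closedBall,
    inter_eq_right.2 ball_subset_closedBall] at h

theorem integral_inner_smul_sq {E : Type*} [NormedAddCommGroup E]
    [InnerProductSpace ℝ E] [MeasurableSpace E] (μ : Measure E) (c : ℝ) (x : E) :
    ∫ y, ⟪c • x, y⟫ ^ 2 ∂μ = c ^ 2 * ∫ y, ⟪x, y⟫ ^ 2 ∂μ := by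
  simp only [real_inner_smul_left, mul_pow, integral_const_mul]

-- For `s ≥ r²` both sides are empty, the radius being `√(r² - s) = 0`.
theorem setOf_lt_sub_dist_sq_eq_ball {X : Type*} [MetricSpace X] (x : X) (r s : ℝ) :
    {y | s < r ^ 2 - dist y x ^ 2} = ball x √(r ^ 2 - s) := by
  ext y
  rw [mem_ball, Real.lt_sqrt dist_nonneg]
  exact ⟨fun (h : s < _) => by linarith, fun h => show s < _ by linarith⟩

section LayerCake

variable {X : Type*} [MetricSpace X] [MeasurableSpace X] [OpensMeasurableSpace X]
  (μ : Measure X) (x : X) (r : ℝ)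

theorem lintegral_posPart_sub_dist_sq :
    ∫⁻ y, ENNReal.ofReal (max (r ^ 2 - dist y x ^ 2) 0) ∂μ
      = ∫⁻ s in Ioi 0, μ (ball x √(r ^ 2 - s)) := by
  rw [lintegral_eq_lintegral_meas_lt μ (f := fun y => max (r ^ 2 - dist y x ^ 2) 0)
    (.of_forall fun _ => le_max_right _ _) (by fun_prop)]
  refine setLIntegral_congr_fun measurableSet_Ioi fun s (hs : 0 < s) => ?_
  simp only [lt_max_iff, hs.not_gt, or_false, setOf_lt_sub_dist_sq_eq_ball]

theorem lintegral_sq_posPart_sub_dist_sq :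
    ∫⁻ y, ENNReal.ofReal (max (r ^ 2 - dist y x ^ 2) 0 ^ 2) ∂μ
      = ∫⁻ s in Ioi 0, μ (ball x √(r ^ 2 - √s)) := by
  rw [lintegral_eq_lintegral_meas_lt μ (f := fun y => max (r ^ 2 - dist y x ^ 2) 0 ^ 2)
    (.of_forall fun _ => sq_nonneg _) (by fun_prop)]
  refine setLIntegral_congr_fun measurableSet_Ioi fun s (hs : 0 < s) => ?_
  have (a : ℝ) : s < max a 0 ^ 2 ↔ √s < a := by
    rw [← Real.sqrt_lt hs.le (le_max_right a 0), lt_max_iff,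
      or_iff_left (Real.sqrt_nonneg s).not_gt]
  simp only [this, setOf_lt_sub_dist_sq_eq_ball]

end LayerCake

theorem unitBallVol_pos (k : ℕ) : 0 < unitBallVol k :=
  ENNReal.toReal_pos (measure_ball_pos volume 0 one_pos).ne' measure_ball_lt_top.ne

theorem integral_sqrt_sub_pow {r : ℝ} (hr : 0 < r) (k : ℕ) :
    ∫ t in Ioo 0 (r ^ 2), √(r ^ 2 - t) ^ k = 2 * r ^ (k + 2) / (k + 2) := by
  have hrpow (t : ℝ) (ht : t ∈ uIcc 0 (r ^ 2)) : √t ^ k = t ^ ((k : ℝ) / 2) := by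
    rw [uIcc_of_le (by positivity)] at ht
    rw [Real.sqrt_eq_rpow, ← Real.rpow_natCast, ← Real.rpow_mul ht.1, one_div_mul_eq_div]
  have hk : -1 < (k : ℝ) / 2 := by linarith [show (0 : ℝ) ≤ k / 2 by positivity]
  rw [← integral_Ioc_eq_integral_Ioo, ← intervalIntegral.integral_of_le (by positivity),
    intervalIntegral.integral_comp_sub_left (fun t => √t ^ k), sub_self, sub_zero,
    intervalIntegral.integral_congr hrpow, integral_rpow (.inl hk),
    Real.zero_rpow (by positivity), ← Real.rpow_natCast r (k + 2), ← Real.rpow_two r,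
    ← Real.rpow_mul hr.le]
  push_cast
  field_simp
  exact sub_zero _

-- The error vanishes unless `t` and `t + u` have opposite signs, which forces `|t| ≤ |u|`.
theorem abs_sq_posPart_add_sub_le (t u : ℝ) :
    |max (t + u) 0 ^ 2 - max t 0 ^ 2 - (if 0 < t then 2 * t * u + u ^ 2 else 0)|
      ≤ if |t| ≤ |u| then u ^ 2 else 0 := by
  rcases le_or_gt (t + u) 0 with h1 | h1 <;> rcases le_or_gt t 0 with h2 | h2
  · rw [max_eq_right h1, max_eq_right h2, if_neg h2.not_gt, zero_pow two_ne_zero, sub_self,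
      sub_self, abs_zero]
    split_ifs <;> positivity
  · rw [max_eq_right h1, max_eq_left h2.le, if_pos h2,
      if_pos (by rw [abs_of_pos h2, abs_of_nonpos (by linarith)]; linarith), abs_le]
    constructor <;> nlinarith
  · rw [max_eq_left h1.le, max_eq_right h2, if_neg h2.not_gt,
      if_pos (by rw [abs_of_nonpos h2, abs_of_pos (by linarith : (0 : ℝ) < u)]; linarith), abs_le]
    constructor <;> nlinarith
  · rw [max_eq_left h1.le, max_eq_left h2.le, if_pos h2,
      show (t + u) ^ 2 - t ^ 2 - (2 * t * u + u ^ 2) = 0 by ring, abs_zero]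
    split_ifs <;> positivity

theorem abs_sq_posPart_sub_norm_sub_sq_sub_le {E : Type*} [NormedAddCommGroup E]
    [InnerProductSpace ℝ E] {r : ℝ} {x : E} (hr0 : 0 ≤ r) (hr : r ≤ 1 / 2) (hx : ‖x‖ ≤ 1 / 8)
    (y : E) :
    |max (r ^ 2 - ‖y - x‖ ^ 2) 0 ^ 2 - max (r ^ 2 - ‖y‖ ^ 2) 0 ^ 2
        - (ball 0 r).indicator (fun y => 2 * (r ^ 2 - ‖y‖ ^ 2) * (2 * ⟪x, y⟫ - ‖x‖ ^ 2)
            + (2 * ⟪x, y⟫ - ‖x‖ ^ 2) ^ 2) y|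
      ≤ {y | |r ^ 2 - ‖y‖ ^ 2| ≤ 3 * ‖x‖}.indicator (fun _ => 9 * ‖x‖ ^ 2) y := by
  set t := r ^ 2 - ‖y‖ ^ 2
  set u := 2 * ⟪x, y⟫ - ‖x‖ ^ 2
  by_cases hy : ‖y‖ < 1
  · have htu : r ^ 2 - ‖y - x‖ ^ 2 = t + u := by
      rw [norm_sub_sq_real, real_inner_comm]
      ring
    have hind : (ball 0 r).indicator (fun y => 2 * (r ^ 2 - ‖y‖ ^ 2) * (2 * ⟪x, y⟫ - ‖x‖ ^ 2)
        + (2 * ⟪x, y⟫ - ‖x‖ ^ 2) ^ 2) y = if 0 < t then 2 * t * u + u ^ 2 else 0 := by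
      simp only [indicator, mem_ball_zero_iff, t, sub_pos,
        pow_lt_pow_iff_left₀ (norm_nonneg y) hr0 two_ne_zero]
      rfl
    rw [htu, hind]
    refine (abs_sq_posPart_add_sub_le t u).trans ?_
    split_ifs with hsmall
    · have hu : |u| ≤ 3 * ‖x‖ := by
        have := abs_real_inner_le_norm x y
        calc |u| ≤ 2 * |⟪x, y⟫| + ‖x‖ ^ 2 := by
              refine (abs_sub _ _).trans ?_
              rw [abs_mul, abs_two, abs_of_nonneg (sq_nonneg ‖x‖)]
          _ ≤ 3 * ‖x‖ := by nlinarith [norm_nonneg x]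
      rw [indicator_of_mem (show y ∈ {y : E | |r ^ 2 - ‖y‖ ^ 2| ≤ 3 * ‖x‖} from hsmall.trans hu)]
      nlinarith [abs_nonneg u, sq_abs u]
    · exact indicator_nonneg (fun _ _ => by positivity) y
  · have hyx : r ≤ ‖y - x‖ := by linarith [norm_sub_norm_le y x]
    rw [max_eq_right (by nlinarith), max_eq_right (by nlinarith),
      indicator_of_notMem (by rw [mem_ball_zero_iff]; linarith)]
    simpa using indicator_nonneg (fun _ _ => by positivity) y

namespace LocUniform

variable {n k : ℕ} {μ : Measure (Eu n)} {x : Eu n} {r : ℝ}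

theorem measure_ball_eq (hμ : LocUniform n k μ) (hx : x ∈ msupp μ) {z : Eu n}
    (hz : z ∈ msupp μ) {s : ℝ} (hs : s ≤ 1) : μ (ball x s) = μ (ball z s) := by
  rcases le_or_gt s 0 with hs0 | hs0
  · simp [ball_eq_empty.2 hs0]
  · rw [hμ x hx s hs0 hs, hμ z hz s hs0 hs]

theorem integral_sq_posPart_sub_dist_sq_eq (hμ : LocUniform n k μ) (hx : x ∈ msupp μ)
    {z : Eu n} (hz : z ∈ msupp μ) (hr0 : 0 ≤ r) (hr1 : r ≤ 1) :
    ∫ y, max (r ^ 2 - dist y x ^ 2) 0 ^ 2 ∂μ = ∫ y, max (r ^ 2 - dist y z ^ 2) 0 ^ 2 ∂μ := by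
  have hlayer (c : Eu n) : ∫ y, max (r ^ 2 - dist y c ^ 2) 0 ^ 2 ∂μ
      = (∫⁻ s in Ioi 0, μ (ball c √(r ^ 2 - √s))).toReal := by
    rw [integral_eq_lintegral_of_nonneg_ae (.of_forall fun _ => sq_nonneg _) (by fun_prop),
      lintegral_sq_posPart_sub_dist_sq]
  have hrad (s : ℝ) : √(r ^ 2 - √s) ≤ 1 := by
    refine (Real.sqrt_le_sqrt (show r ^ 2 - √s ≤ r ^ 2 by linarith [Real.sqrt_nonneg s])).trans ?_
    rwa [Real.sqrt_sq hr0]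
  simp only [hlayer, hμ.measure_ball_eq hx hz (hrad _)]

theorem measure_ball_sqrt_sub (hμ : LocUniform n k μ) (hx : x ∈ msupp μ) (hr0 : 0 < r)
    (hr1 : r ≤ 1) {s : ℝ} (hs0 : 0 < s) :
    μ (ball x √(r ^ 2 - s))
      = (Iio (r ^ 2)).indicator (fun s => ENNReal.ofReal (unitBallVol k * √(r ^ 2 - s) ^ k)) s := by
  by_cases hs : s < r ^ 2
  · rw [indicator_of_mem (show s ∈ Iio (r ^ 2) from hs)]
    exact hμ x hx _ (Real.sqrt_pos.2 (by linarith))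
      ((Real.sqrt_le_sqrt (show r ^ 2 - s ≤ 1 by nlinarith)).trans_eq Real.sqrt_one)
  · rw [indicator_of_notMem (show s ∉ Iio (r ^ 2) from hs), Real.sqrt_eq_zero'.2 (by linarith),
      ball_zero, measure_empty]

theorem integral_ball_sub_dist_sq (hμ : LocUniform n k μ) (hx : x ∈ msupp μ) (hr0 : 0 < r)
    (hr1 : r ≤ 1) :
    ∫ y in ball x r, (r ^ 2 - dist y x ^ 2) ∂μ = 2 * unitBallVol k * r ^ (k + 2) / (k + 2) := by
  have hposPart (y : Eu n) : (ball x r).indicator (fun y => r ^ 2 - dist y x ^ 2) y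
      = max (r ^ 2 - dist y x ^ 2) 0 := by
    by_cases hy : dist y x < r
    · rw [indicator_of_mem (mem_ball.2 hy), max_eq_left]
      nlinarith [dist_nonneg (x := y) (y := x)]
    · rw [indicator_of_notMem (mt mem_ball.1 hy), max_eq_right]
      nlinarith [not_lt.1 hy]
  have hnonneg (t : ℝ) : 0 ≤ unitBallVol k * √(r ^ 2 - t) ^ k := by
    have := unitBallVol_pos k
    positivity
  have hint : IntegrableOn (fun t => unitBallVol k * √(r ^ 2 - t) ^ k) (Ioo 0 (r ^ 2)) :=
    (Continuous.integrableOn_Icc (by fun_prop)).mono_set Ioo_subset_Icc_self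
  rw [← integral_indicator measurableSet_ball]
  simp only [hposPart]
  rw [integral_eq_lintegral_of_nonneg_ae (f := fun y => max (r ^ 2 - dist y x ^ 2) 0)
      (.of_forall fun _ => le_max_right _ _) (by fun_prop),
    lintegral_posPart_sub_dist_sq,
    setLIntegral_congr_fun measurableSet_Ioi fun s hs => hμ.measure_ball_sqrt_sub hx hr0 hr1 hs,
    lintegral_indicator measurableSet_Iio, Measure.restrict_restrict measurableSet_Iio,
    Iio_inter_Ioi, ← ofReal_integral_eq_lintegral_ofReal hint (.of_forall hnonneg),
    ENNReal.toReal_ofReal (setIntegral_nonneg measurableSet_Ioo fun t _ => hnonneg t),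
    integral_const_mul, integral_sqrt_sub_pow hr0]
  ring

theorem measure_ball_diff_ball_le (hμ : LocUniform n k μ) (hx : x ∈ msupp μ) {s₁ s₂ : ℝ}
    (hs₁ : 0 < s₁) (h12 : s₁ ≤ s₂) (hs₂ : s₂ ≤ 1) :
    μ (ball x s₂ \ ball x s₁) ≤ ENNReal.ofReal (unitBallVol k * k * (s₂ - s₁)) := by
  have hpow : s₂ ^ k - s₁ ^ k ≤ (s₂ - s₁) * k := by
    refine (le_abs_self _).trans ((abs_pow_sub_pow_le ..).trans ?_)
    rw [abs_of_nonneg (sub_nonneg.2 h12), abs_of_pos hs₁, abs_of_nonneg (hs₁.le.trans h12),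
      max_eq_left h12]
    exact mul_le_of_le_one_right (by positivity) (pow_le_one₀ (by linarith) hs₂)
  have hω := unitBallVol_pos k
  rw [measure_sdiff (ball_subset_ball h12) measurableSet_ball.nullMeasurableSet
      (by rw [hμ x hx s₁ hs₁ (h12.trans hs₂)]; exact ENNReal.ofReal_ne_top),
    hμ x hx s₂ (hs₁.trans_le h12) hs₂, hμ x hx s₁ hs₁ (h12.trans hs₂),
    ← ENNReal.ofReal_sub _ (by positivity)]
  refine ENNReal.ofReal_le_ofReal ?_
  nlinarith

theorem measure_setOf_abs_sub_dist_sq_le_le (hμ : LocUniform n k μ) (hx : x ∈ msupp μ) {c : ℝ}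
    (hr0 : 0 < r) (hr : r < 1 / 2) (hc0 : 0 < c) (hcr : c ≤ r ^ 2 / 8) :
    μ {y | |r ^ 2 - dist y x ^ 2| ≤ 3 * c} ≤ ENNReal.ofReal (unitBallVol k * k * (18 * c / r)) := by
  set s₁ := √(r ^ 2 - 3 * c)
  set s₂ := √(r ^ 2 + 6 * c)
  have hs₁sq : s₁ ^ 2 = r ^ 2 - 3 * c := Real.sq_sqrt (by nlinarith)
  have hs₂sq : s₂ ^ 2 = r ^ 2 + 6 * c := Real.sq_sqrt (by nlinarith)
  have hs₁ : r / 2 ≤ s₁ := Real.le_sqrt_of_sq_le (by nlinarith)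
  have hs₂ : s₂ ≤ 1 :=
    (Real.sqrt_le_sqrt (show r ^ 2 + 6 * c ≤ 1 by nlinarith)).trans_eq Real.sqrt_one
  have h12 : s₁ ≤ s₂ := Real.sqrt_le_sqrt (by linarith)
  have hshell : {y | |r ^ 2 - dist y x ^ 2| ≤ 3 * c} ⊆ ball x s₂ \ ball x s₁ := by
    intro y (hy : |r ^ 2 - dist y x ^ 2| ≤ 3 * c)
    obtain ⟨hlow, hup⟩ := abs_le.1 hy
    refine ⟨mem_ball.2 (pow_lt_pow_iff_left₀ dist_nonneg (Real.sqrt_nonneg _) two_ne_zero |>.1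
      (by linarith)), fun hy₁ => ?_⟩
    have := pow_lt_pow_left₀ (mem_ball.1 hy₁) dist_nonneg two_ne_zero
    linarith
  have hwidth : s₂ - s₁ ≤ 18 * c / r := by
    rw [le_div_iff₀ hr0]
    nlinarith [Real.sqrt_nonneg (r ^ 2 + 6 * c)]
  refine (measure_mono hshell).trans ((hμ.measure_ball_diff_ball_le hx (by linarith) h12 hs₂).trans
    (ENNReal.ofReal_le_ofReal ?_))
  have := unitBallVol_pos k
  gcongr

variable [IsLocallyFiniteMeasure μ]

theorem abs_integral_ball_expansion_le (hμ : LocUniform n k μ) (h0 : (0 : Eu n) ∈ msupp μ)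
    (hx : x ∈ msupp μ) (hr0 : 0 < r) (hr : r < 1 / 2) (hx0 : 0 < ‖x‖)
    (hxr : ‖x‖ ≤ r ^ 2 / 8) :
    |∫ y in ball 0 r, (2 * (r ^ 2 - ‖y‖ ^ 2) * (2 * ⟪x, y⟫ - ‖x‖ ^ 2)
        + (2 * ⟪x, y⟫ - ‖x‖ ^ 2) ^ 2) ∂μ|
      ≤ unitBallVol k * k * (18 * ‖x‖ / r) * (9 * ‖x‖ ^ 2) := by
  set A := {y : Eu n | |r ^ 2 - ‖y‖ ^ 2| ≤ 3 * ‖x‖}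
  have hAmeas : MeasurableSet A := measurableSet_le (by fun_prop) measurable_const
  have hA : μ A ≤ ENNReal.ofReal (unitBallVol k * k * (18 * ‖x‖ / r)) := by
    simpa only [dist_zero_right] using hμ.measure_setOf_abs_sub_dist_sq_le_le h0 hr0 hr hx0 hxr
  have hAint : Integrable (A.indicator fun _ => 9 * ‖x‖ ^ 2) μ :=
    (integrableOn_const (hA.trans_lt ENNReal.ofReal_lt_top).ne).integrable_indicator hAmeas
  have hbump (c : Eu n) : Integrable (fun y => max (r ^ 2 - ‖y - c‖ ^ 2) 0 ^ 2) μ := by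
    refine Continuous.integrable_of_hasCompactSupport (by fun_prop)
      (HasCompactSupport.intro (isCompact_closedBall c r) fun y hy => ?_)
    rw [mem_closedBall, dist_eq_norm, not_le] at hy
    rw [max_eq_right (by nlinarith), zero_pow two_ne_zero]
  have hbump_eq :
      ∫ y, max (r ^ 2 - ‖y - x‖ ^ 2) 0 ^ 2 ∂μ = ∫ y, max (r ^ 2 - ‖y‖ ^ 2) 0 ^ 2 ∂μ := by
    simpa only [dist_eq_norm, sub_zero] using
      hμ.integral_sq_posPart_sub_dist_sq_eq hx h0 hr0.le (by linarith)
  have hexp : IntegrableOn (fun y => 2 * (r ^ 2 - ‖y‖ ^ 2) * (2 * ⟪x, y⟫ - ‖x‖ ^ 2)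
      + (2 * ⟪x, y⟫ - ‖x‖ ^ 2) ^ 2) (ball 0 r) μ :=
    Continuous.integrableOn_ball (by fun_prop) 0 r
  -- The bumps centred at `x` and at `0` have the same integral: only the expansion error remains.
  calc _ = ‖∫ y, (max (r ^ 2 - ‖y - x‖ ^ 2) 0 ^ 2 - max (r ^ 2 - ‖y‖ ^ 2) 0 ^ 2
        - (ball 0 r).indicator (fun y => 2 * (r ^ 2 - ‖y‖ ^ 2) * (2 * ⟪x, y⟫ - ‖x‖ ^ 2)
            + (2 * ⟪x, y⟫ - ‖x‖ ^ 2) ^ 2) y) ∂μ‖ := by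
        have hbump0 : Integrable (fun y => max (r ^ 2 - ‖y‖ ^ 2) 0 ^ 2) μ := by
          simpa using hbump 0
        rw [integral_sub (f := fun y => max (r ^ 2 - ‖y - x‖ ^ 2) 0 ^ 2
              - max (r ^ 2 - ‖y‖ ^ 2) 0 ^ 2) ((hbump x).sub hbump0)
            (hexp.integrable_indicator measurableSet_ball),
          integral_sub (hbump x) hbump0, hbump_eq, sub_self, zero_sub, norm_neg,
          integral_indicator measurableSet_ball, Real.norm_eq_abs]
    _ ≤ ∫ y, A.indicator (fun _ => 9 * ‖x‖ ^ 2) y ∂μ :=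
        norm_integral_le_of_norm_le hAint (.of_forall fun y =>
          abs_sq_posPart_sub_norm_sub_sq_sub_le hr0.le hr.le (by nlinarith) y)
    _ = μ.real A * (9 * ‖x‖ ^ 2) := by rw [integral_indicator_const _ hAmeas, smul_eq_mul]
    _ ≤ _ := by
        gcongr
        exact ENNReal.toReal_le_of_le_ofReal (by have := unitBallVol_pos k; positivity) hA

theorem abs_defect_le (hμ : LocUniform n k μ) (h0 : (0 : Eu n) ∈ msupp μ) (hx : x ∈ msupp μ)
    (hr0 : 0 < r) (hr : r < 1 / 2) (hxr : ‖x‖ ≤ r ^ 2 / 8) :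
    |⟪∫ y in ball 0 r, (r ^ 2 - ‖y‖ ^ 2) • y ∂μ, x⟫
        + (∫ y in ball 0 r, ⟪x, y⟫ ^ 2 ∂μ - (∫ y in ball 0 r, (r ^ 2 - ‖y‖ ^ 2) ∂μ) / 2 * ‖x‖ ^ 2)|
      ≤ (unitBallVol k * k * 18 * 9 / r + 5 * μ.real (ball 0 r)) / 4 * ‖x‖ ^ 3 := by
  rcases (norm_nonneg x).eq_or_lt with hx0 | hx0
  · obtain rfl := norm_eq_zero.1 hx0.symm
    simp
  have hint {f : Eu n → ℝ} (hf : Continuous f) : Integrable f (μ.restrict (ball 0 r)) :=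
    hf.integrableOn_ball 0 r
  have hb : ⟪∫ y in ball 0 r, (r ^ 2 - ‖y‖ ^ 2) • y ∂μ, x⟫
      = ∫ y in ball 0 r, (r ^ 2 - ‖y‖ ^ 2) * ⟪x, y⟫ ∂μ := by
    rw [real_inner_comm, ← integral_inner (Continuous.integrableOn_ball (by fun_prop) 0 r)]
    simp only [real_inner_smul_right]
  have hsplit : ∫ y in ball 0 r, (2 * (r ^ 2 - ‖y‖ ^ 2) * (2 * ⟪x, y⟫ - ‖x‖ ^ 2)
        + (2 * ⟪x, y⟫ - ‖x‖ ^ 2) ^ 2) ∂μ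
      = 4 * (∫ y in ball 0 r, (r ^ 2 - ‖y‖ ^ 2) * ⟪x, y⟫ ∂μ + (∫ y in ball 0 r, ⟪x, y⟫ ^ 2 ∂μ
          - (∫ y in ball 0 r, (r ^ 2 - ‖y‖ ^ 2) ∂μ) / 2 * ‖x‖ ^ 2))
        + ∫ y in ball 0 r, (‖x‖ ^ 4 - 4 * ‖x‖ ^ 2 * ⟪x, y⟫) ∂μ := by
    rw [← integral_div, ← integral_mul_const,
      ← integral_sub (hint (by fun_prop)) (hint (by fun_prop)),
      ← integral_add (hint (by fun_prop)) (hint (by fun_prop)), ← integral_const_mul,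
      ← integral_add (hint (by fun_prop)) (hint (by fun_prop))]
    congr 1 with y
    ring
  have hrem : |∫ y in ball 0 r, (‖x‖ ^ 4 - 4 * ‖x‖ ^ 2 * ⟪x, y⟫) ∂μ|
      ≤ 5 * ‖x‖ ^ 3 * μ.real (ball 0 r) := by
    rw [← Real.norm_eq_abs]
    refine norm_setIntegral_le_of_norm_le_const measure_ball_lt_top fun y hy => ?_
    have hxy := abs_real_inner_le_norm x y
    have hy1 : ‖y‖ ≤ 1 := by rw [mem_ball_zero_iff] at hy; linarith
    have hx1 : ‖x‖ ≤ 1 := by nlinarith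
    rw [Real.norm_eq_abs, abs_le]
    constructor <;> nlinarith [abs_le.1 hxy, norm_nonneg x, norm_nonneg y,
      mul_le_mul_of_nonneg_left hy1 (norm_nonneg x), pow_le_pow_of_le_one (norm_nonneg x) hx1
        (show 3 ≤ 4 by norm_num)]
  have hexp := hμ.abs_integral_ball_expansion_le h0 hx hr0 hr hx0 hxr
  have hconst : unitBallVol k * k * (18 * ‖x‖ / r) * (9 * ‖x‖ ^ 2)
      = unitBallVol k * k * 18 * 9 / r * ‖x‖ ^ 3 := by
    field_simp
  rw [hsplit, hconst, abs_le] at hexp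
  rw [abs_le] at hrem
  rw [hb, abs_le]
  constructor <;> nlinarith

theorem isBigO_defect (hμ : LocUniform n k μ) (h0 : (0 : Eu n) ∈ msupp μ) (hr0 : 0 < r)
    (hr : r < 1 / 2) :
    (fun x => ⟪∫ y in ball 0 r, (r ^ 2 - ‖y‖ ^ 2) • y ∂μ, x⟫
        + (∫ y in ball 0 r, ⟪x, y⟫ ^ 2 ∂μ - (∫ y in ball 0 r, (r ^ 2 - ‖y‖ ^ 2) ∂μ) / 2 * ‖x‖ ^ 2))
      =O[𝓝[msupp μ] 0] fun x => ‖x‖ ^ 3 := by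
  refine .of_bound ((unitBallVol k * k * 18 * 9 / r + 5 * μ.real (ball 0 r)) / 4)
    (eventually_nhdsWithin_iff.2 ?_)
  filter_upwards [closedBall_mem_nhds (0 : Eu n) (show 0 < r ^ 2 / 8 by positivity)]
    with x hxr hx
  rw [mem_closedBall, dist_zero_right] at hxr
  rw [Real.norm_eq_abs, norm_pow, norm_norm]
  exact hμ.abs_defect_le h0 hx hr0 hr hxr

end LocUniform

theorem tendsto_div_sq_of_contDiff_two {F : Type*} [NormedAddCommGroup F] [NormedSpace ℝ F]
    {f : F → ℝ} (hf : ContDiff ℝ 2 f) (hf0 : f 0 = 0) (hfd : fderiv ℝ f 0 = 0) (v : F) :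
    Tendsto (fun ε : ℝ => f (ε • v) / ε ^ 2) (𝓝[>] 0)
      (𝓝 (fderiv ℝ (fun x => fderiv ℝ f x v) 0 v / 2)) := by
  set ψ : F → ℝ := fun x => fderiv ℝ f x v
  have hline (s : ℝ) : HasDerivAt (fun t : ℝ => t • v) v s := by
    simpa using (hasDerivAt_id s).smul_const v
  have hderiv (s : ℝ) : HasDerivAt (fun t : ℝ => f (t • v)) (ψ (s • v)) s :=
    ((hf.differentiable two_ne_zero _).hasFDerivAt).comp_hasDerivAt s (hline s)
  have hψ : DifferentiableAt ℝ ψ 0 :=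
    (ContinuousLinearMap.apply ℝ ℝ v).differentiableAt.comp 0
      ((hf.fderiv_right le_rfl).differentiable one_ne_zero 0)
  have hslope : Tendsto (fun s : ℝ => ψ (s • v) / s) (𝓝[≠] 0) (𝓝 (fderiv ℝ ψ 0 v)) := by
    have hψ' : HasFDerivAt ψ (fderiv ℝ ψ 0) ((fun t : ℝ => t • v) 0) := by
      simpa using hψ.hasFDerivAt
    have h := hasDerivAt_iff_tendsto_slope.1 (hψ'.comp_hasDerivAt 0 (hline 0))
    refine h.congr fun s => ?_
    simp [slope_def_field, ψ, hfd, div_eq_inv_mul]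
  refine HasDerivAt.lhopital_zero_nhdsGT (.of_forall hderiv)
    (.of_forall fun s => by simpa using hasDerivAt_pow 2 s)
    (eventually_nhdsWithin_of_forall fun s (hs : 0 < s) => by positivity) ?_ ?_ ?_
  · exact ((hf.continuous.comp (by fun_prop : Continuous fun t : ℝ => t • v)).tendsto' 0 0
      (by simp [hf0])).mono_left nhdsWithin_le_nhds
  · exact ((continuous_pow 2).tendsto' (0 : ℝ) 0 (by simp)).mono_left nhdsWithin_le_nhds
  · refine ((hslope.div_const 2).mono_left (nhdsWithin_mono 0 fun s hs => ne_of_gt hs)).congr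
      fun s => ?_
    rw [div_div, mul_comm]

theorem eq_zero_and_eq_zero_of_tendsto_div_add {c L : ℝ} {R : ℝ → ℝ}
    (hR : Tendsto R (𝓝[>] 0) (𝓝 L)) (h : Tendsto (fun ε => c / ε + R ε) (𝓝[>] 0) (𝓝 0)) :
    c = 0 ∧ L = 0 := by
  have hpos : ∀ᶠ ε : ℝ in 𝓝[>] 0, 0 < ε := self_mem_nhdsWithin
  have hdiv : Tendsto (fun ε => c / ε) (𝓝[>] 0) (𝓝 (0 - L)) :=
    (h.sub hR).congr fun ε => add_sub_cancel_right _ _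
  have hc : Tendsto (fun ε => ε * (c / ε)) (𝓝[>] 0) (𝓝 (0 * (0 - L))) :=
    (tendsto_id.mono_left nhdsWithin_le_nhds).mul hdiv
  rw [zero_mul] at hc
  have hc0 : c = 0 := tendsto_nhds_unique
    (tendsto_const_nhds.congr' (hpos.mono fun ε hε => (mul_div_cancel₀ c hε.ne').symm)) hc
  subst hc0
  exact ⟨rfl, tendsto_nhds_unique hR (by simpa using h)⟩

section SecondOrderCurve

variable {V : Type*} [NormedAddCommGroup V] [NormedSpace ℝ V] {γ : ℝ → V} {v w : V}

theorem tendsto_inv_smul_of_tendsto_second_order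
    (hγ : Tendsto (fun ε : ℝ => (ε ^ 2)⁻¹ • (γ ε - ε • v)) (𝓝[>] 0) (𝓝 w)) :
    Tendsto (fun ε : ℝ => ε⁻¹ • γ ε) (𝓝[>] 0) (𝓝 v) := by
  have h := tendsto_const_nhds (x := v) |>.add
    ((tendsto_id.mono_left nhdsWithin_le_nhds).smul hγ)
  rw [zero_smul, add_zero] at h
  refine h.congr' (eventually_nhdsWithin_of_forall fun ε (hε : 0 < ε) => ?_)
  simp only [id, smul_sub, smul_smul]
  match_scalars <;> field_simp
  ring

theorem tendsto_zero_of_tendsto_second_order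
    (hγ : Tendsto (fun ε : ℝ => (ε ^ 2)⁻¹ • (γ ε - ε • v)) (𝓝[>] 0) (𝓝 w)) :
    Tendsto γ (𝓝[>] 0) (𝓝 0) := by
  have h := (tendsto_id.mono_left nhdsWithin_le_nhds).smul
    (tendsto_inv_smul_of_tendsto_second_order hγ)
  rw [zero_smul] at h
  refine h.congr' (eventually_nhdsWithin_of_forall fun ε (hε : 0 < ε) => ?_)
  simp [smul_smul, hε.ne']

theorem apply_eq_zero_and_apply_add_eq_zero_of_isBigO (ℓ : V →L[ℝ] ℝ) {q : V → ℝ}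
    (hq : Continuous q) (hq2 : ∀ (c : ℝ) x, q (c • x) = c ^ 2 * q x) {S : Set V}
    (hD : (fun x => ℓ x + q x) =O[𝓝[S] 0] fun x => ‖x‖ ^ 3) (hγS : ∀ᶠ ε in 𝓝[>] 0, γ ε ∈ S)
    (hγ : Tendsto (fun ε : ℝ => (ε ^ 2)⁻¹ • (γ ε - ε • v)) (𝓝[>] 0) (𝓝 w)) :
    ℓ v = 0 ∧ ℓ w + q v = 0 := by
  have hpos : ∀ᶠ ε : ℝ in 𝓝[>] 0, 0 < ε := self_mem_nhdsWithin
  have hγ1 := tendsto_inv_smul_of_tendsto_second_order hγ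
  obtain ⟨C, hC⟩ := hD.bound
  have hCγ : ∀ᶠ ε in 𝓝[>] 0, |ℓ (γ ε) + q (γ ε)| ≤ C * ‖γ ε‖ ^ 3 := by
    simpa using (tendsto_nhdsWithin_iff.2
      ⟨tendsto_zero_of_tendsto_second_order hγ, hγS⟩).eventually hC
  have hbound : Tendsto (fun ε : ℝ => C * ε * ‖ε⁻¹ • γ ε‖ ^ 3) (𝓝[>] 0) (𝓝 0) := by
    simpa using ((tendsto_id.mono_left nhdsWithin_le_nhds).const_mul C).mul (hγ1.norm.pow 3)
  have hdefect : Tendsto (fun ε => (ℓ (γ ε) + q (γ ε)) / ε ^ 2) (𝓝[>] 0) (𝓝 0) := by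
    refine squeeze_zero_norm' ?_ hbound
    filter_upwards [hCγ, hpos] with ε hε hε0
    rw [Real.norm_eq_abs, abs_div, abs_of_pos (by positivity : (0 : ℝ) < ε ^ 2),
      div_le_iff₀ (by positivity), norm_smul, Real.norm_eq_abs, abs_inv, abs_of_pos hε0]
    refine hε.trans_eq ?_
    field_simp
  have hsecond : Tendsto (fun ε => ℓ ((ε ^ 2)⁻¹ • (γ ε - ε • v)) + q (ε⁻¹ • γ ε)) (𝓝[>] 0)
      (𝓝 (ℓ w + q v)) :=
    ((ℓ.continuous.tendsto w).comp hγ).add ((hq.tendsto v).comp hγ1)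
  refine eq_zero_and_eq_zero_of_tendsto_div_add hsecond (hdefect.congr' ?_)
  filter_upwards [hpos] with ε hε
  rw [hq2, map_smul, map_sub, map_smul, smul_eq_mul, smul_eq_mul]
  field_simp
  ring

end SecondOrderCurve

theorem tendsto_graphMap_second_order {n k : ℕ} {φ : Fin (n + 1) → EuclideanSpace ℝ (Fin k) → ℝ}
    (hφC2 : ∀ j : Fin (n + 1), k ≤ (j : ℕ) → ContDiff ℝ 2 (φ j))
    (hφ0 : ∀ j : Fin (n + 1), k ≤ (j : ℕ) → φ j 0 = 0)
    (hφd : ∀ j : Fin (n + 1), k ≤ (j : ℕ) → fderiv ℝ (φ j) 0 = 0)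
    {e : Eu n} (he0 : ∀ j : Fin (n + 1), k ≤ (j : ℕ) → e j = 0) {e' : EuclideanSpace ℝ (Fin k)}
    (he' : ∀ (j : Fin (n + 1)) (hj : (j : ℕ) < k), e' ⟨j, hj⟩ = e j) :
    Tendsto (fun ε : ℝ => (ε ^ 2)⁻¹ • (graphMap n k φ (ε • e') - ε • e)) (𝓝[>] 0)
      (𝓝 ((EuclideanSpace.equiv (Fin (n + 1)) ℝ).symm fun j =>
        if k ≤ (j : ℕ) then fderiv ℝ (fun x => fderiv ℝ (φ j) x e') 0 e' / 2 else 0)) := by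
  have hcoord : Tendsto (fun ε : ℝ => EuclideanSpace.equiv (Fin (n + 1)) ℝ
      ((ε ^ 2)⁻¹ • (graphMap n k φ (ε • e') - ε • e))) (𝓝[>] 0)
      (𝓝 fun j => if k ≤ (j : ℕ) then fderiv ℝ (fun x => fderiv ℝ (φ j) x e') 0 e' / 2 else 0) := by
    refine tendsto_pi_nhds.2 fun j => ?_
    by_cases hj : (j : ℕ) < k
    · simp [graphMap, hj, he' j hj, hj.not_ge]
    · have hkj := not_lt.1 hj
      simpa [graphMap, hj, hkj, he0 j hkj, div_eq_inv_mul] using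
        tendsto_div_sq_of_contDiff_two (hφC2 j hkj) (hφ0 j hkj) (hφd j hkj) e'
  exact (((EuclideanSpace.equiv (Fin (n + 1)) ℝ).symm.continuous.tendsto _).comp hcoord).congr
    fun ε => (EuclideanSpace.equiv (Fin (n + 1)) ℝ).symm_apply_apply _

/-- the identity `Σ_{j≥k} b_j ⟨∇²φ_j(0)e, e⟩ = 1 − Q_{0,r}(e)` for every
unit vector `e ∈ S^{k-1} × {0}^{n+1-k}`. -/
theorem stmt5 (n k : ℕ) (hk : k ≤ n + 1) (μ : Measure (Eu n)) [IsLocallyFiniteMeasure μ]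
    (hμ : LocUniform n k μ) (h0 : (0 : Eu n) ∈ msupp μ)
    (r r₀ : ℝ) (hr0 : 0 < r) (hr : r < 1 / 2) (hr₀ : 0 < r₀)
    (φ : Fin (n + 1) → EuclideanSpace ℝ (Fin k) → ℝ)
    (hφC2 : ∀ j : Fin (n + 1), k ≤ (j : ℕ) → ContDiff ℝ 2 (φ j))
    (hφ0 : ∀ j : Fin (n + 1), k ≤ (j : ℕ) → φ j 0 = 0)
    (hφd : ∀ j : Fin (n + 1), k ≤ (j : ℕ) → fderiv ℝ (φ j) 0 = 0)
    (hgraph : msupp μ ∩ ball (0 : Eu n) r₀ = Set.range (graphMap n k φ) ∩ ball (0 : Eu n) r₀)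
    (e : Eu n) (he : ‖e‖ = 1) (he0 : ∀ j : Fin (n + 1), k ≤ (j : ℕ) → e j = 0)
    (e' : EuclideanSpace ℝ (Fin k))
    (he' : e' = (EuclideanSpace.equiv (Fin k) ℝ).symm (fun i => e (Fin.castLE hk i))) :
    ∑ j ∈ Finset.univ.filter (fun j : Fin (n + 1) => k ≤ (j : ℕ)),
        ((((k : ℝ) + 2) / (2 * unitBallVol k * r ^ (k + 2))) *
          ∫ y in ball (0 : Eu n) r, (r ^ 2 - ‖y‖ ^ 2) * y j ∂μ) *
          (fderiv ℝ (fun x => fderiv ℝ (φ j) x e') 0 e')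
      = 1 - (((k : ℝ) + 2) / (unitBallVol k * r ^ (k + 2))) *
          ∫ y in ball (0 : Eu n) r, ⟪e, y⟫ ^ 2 ∂μ := by
  set M := ∫ y in ball (0 : Eu n) r, (r ^ 2 - ‖y‖ ^ 2) ∂μ
  set b := ∫ y in ball (0 : Eu n) r, (r ^ 2 - ‖y‖ ^ 2) • y ∂μ
  have hγ := tendsto_graphMap_second_order hφC2 hφ0 hφd he0 (e' := e')
    fun j hj => by subst he'; rfl
  have hγS : ∀ᶠ ε : ℝ in 𝓝[>] 0, graphMap n k φ (ε • e') ∈ msupp μ := by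
    filter_upwards [(tendsto_zero_of_tendsto_second_order hγ).eventually (ball_mem_nhds 0 hr₀)]
      with ε hε
    exact (hgraph ▸ ⟨⟨_, rfl⟩, hε⟩ : _ ∈ msupp μ ∩ ball 0 r₀).1
  obtain ⟨-, hsecond⟩ := apply_eq_zero_and_apply_add_eq_zero_of_isBigO (innerSL ℝ b)
    (q := fun x => ∫ y in ball 0 r, ⟪x, y⟫ ^ 2 ∂μ - M / 2 * ‖x‖ ^ 2)
    ((continuous_setIntegral_inner_sq 0 r).sub (by fun_prop))
    (fun c x => by rw [integral_inner_smul_sq, norm_smul, mul_pow, Real.norm_eq_abs, sq_abs]; ring)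
    (hμ.isBigO_defect h0 hr0 hr) hγS hγ
  rw [innerSL_apply_apply, EuclideanSpace.inner_equiv_symm_ite, he, one_pow, mul_one] at hsecond
  have hb (j : Fin (n + 1)) : ∫ y in ball 0 r, (r ^ 2 - ‖y‖ ^ 2) * y j ∂μ = b j :=
    (EuclideanSpace.integral_apply (Continuous.integrableOn_ball (μ := μ)
      (f := fun y : Eu n => (r ^ 2 - ‖y‖ ^ 2) • y) (by fun_prop) 0 r) j).symm
  have hM : M = 2 * unitBallVol k * r ^ (k + 2) / (k + 2) := by
    simpa [M] using hμ.integral_ball_sub_dist_sq h0 hr0 (by linarith)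
  have hsum : ∑ j ∈ Finset.univ.filter (fun j : Fin (n + 1) => k ≤ (j : ℕ)),
      b j * fderiv ℝ (fun x => fderiv ℝ (φ j) x e') 0 e'
      = M - 2 * ∫ y in ball 0 r, ⟪e, y⟫ ^ 2 ∂μ := by
    simp only [← mul_div_assoc, ← Finset.sum_div] at hsecond
    linarith
  have hω := unitBallVol_pos k
  simp only [hb, mul_assoc, ← Finset.mul_sum]
  rw [hsum, hM]
  field_simp
end
end

section
/- Let μ be a Radon measure on ℝ^{n+1} that is locally uniformly distributed: 0 < μ(B(x,r)) = μ(B(y,r)) < ∞ for all x, y ∈ supp μ and 0 < r ≤ 1. Fix p ∈ supp μ and set g(r) = μ(B(p,r)). Suppose there exist z₀ ∈ supp μ, r₀ > 0, and a k-plane P with B(z₀,r₀) ∩ supp μ = B(z₀,r₀) ∩ P. Then the limit c = lim_{r→0} g(r)/(ω_k r^k) exists and c ∈ (0, ∞). -/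
open MeasureTheory Metric Set Filter Module
open scoped RealInnerProductSpace Topology ENNReal

noncomputable section

/-!
Let `π` be `k`-dimensional Lebesgue measure carried isometrically onto the plane `P` and
differentiate `μ` with respect to `μ + π` along balls (Besicovitch). Every ball of radius `r ≤ 1`
centred in the flat piece `T = B(z₀, r₀) ∩ P` has `μ`-measure `g r` and `π`-measure `ω_k r^k`, so
the ratio `g r / (g r + ω_k r^k)` is the same for all centres in `T`. Its limit is therefore the
density `dμ/d(μ + π)` at every point of `T` where differentiation holds. Such points exist
`μ`-a.e. on `T`, where the density is positive, and `π`-a.e. on `T`, where it is `< 1`. Hence the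
limit `K` lies in `(0, 1)`, and `g r / (ω_k r^k) → K / (1 - K) ∈ (0, ∞)`.
-/

theorem tendsto_nhdsGT_of_eventually_tendsto_nhdsLT {α β : Type*} [LinearOrder α]
    [TopologicalSpace α] [OrderTopology α] [DenselyOrdered α] [NoMinOrder α] [NoMaxOrder α]
    [TopologicalSpace β] [RegularSpace β] {h q : α → β} {a : α} {c : β}
    (hh : Tendsto h (𝓝[>] a) (𝓝 c)) (hq : ∀ᶠ r in 𝓝[>] a, Tendsto h (𝓝[<] r) (𝓝 (q r))) :
    Tendsto q (𝓝[>] a) (𝓝 c) := by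
  refine (closed_nhds_basis c).tendsto_right_iff.2 fun U ⟨hU, hUc⟩ => ?_
  obtain ⟨b, hab, hb⟩ := mem_nhdsGT_iff_exists_Ioo_subset.1 (hh hU)
  filter_upwards [hq, Ioo_mem_nhdsGT hab] with r hr hrb
  exact hUc.mem_of_tendsto hr <| mem_of_superset (Ioo_mem_nhdsLT hrb.1)
    fun s hs => hb ⟨hs.1, hs.2.trans hrb.2⟩

theorem tendsto_measure_closedBall_nhdsLT {X : Type*} [PseudoMetricSpace X] [MeasurableSpace X]
    (μ : Measure X) (x : X) (r : ℝ) :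
    Tendsto (fun s => μ (closedBall x s)) (𝓝[<] r) (𝓝 (μ (ball x r))) := by
  have : (atTop : Filter (Iio r)).IsCountablyGenerated := by
    rw [← comap_coe_Iio_nhdsLT r]; infer_instance
  have hU : ball x r = ⋃ s : Iio r, closedBall x s :=
    (biUnion_lt_closedBall x r).symm.trans (iUnion_subtype (· < r) fun s => closedBall x s.1).symm
  rw [← map_coe_Iio_atTop r, tendsto_map'_iff, hU]
  exact tendsto_measure_iUnion_atTop fun s t hst => closedBall_subset_closedBall hst

instance MeasureTheory.Measure.isLocallyFiniteMeasure_add {X : Type*} [TopologicalSpace X] [MeasurableSpace X]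
    (μ ν : Measure X) [IsLocallyFiniteMeasure μ] [IsLocallyFiniteMeasure ν] :
    IsLocallyFiniteMeasure (μ + ν) where
  finiteAtNhds x := by
    obtain ⟨s, hs, hμs⟩ := μ.finiteAt_nhds x
    obtain ⟨t, ht, hνt⟩ := ν.finiteAt_nhds x
    refine ⟨s ∩ t, inter_mem hs ht, ?_⟩
    rw [Measure.add_apply]
    exact ENNReal.add_lt_top.2 ⟨(measure_mono inter_subset_left).trans_lt hμs,
      (measure_mono inter_subset_right).trans_lt hνt⟩

section Besicovitch

variable {X : Type*} [MetricSpace X] [MeasurableSpace X] [BorelSpace X]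
  [SecondCountableTopology X] [HasBesicovitchCovering X] [ProperSpace X]

theorem Besicovitch.ae_tendsto_rnDeriv_ball (ρ μ : Measure X) [IsLocallyFiniteMeasure μ]
    [IsLocallyFiniteMeasure ρ] :
    ∀ᵐ x ∂μ, Tendsto (fun r => ρ (ball x r) / μ (ball x r)) (𝓝[>] 0)
      (𝓝 (ρ.rnDeriv μ x)) := by
  -- Open balls are the left limits of closed balls, for which Mathlib has the result.
  filter_upwards [Besicovitch.ae_tendsto_rnDeriv ρ μ, μ.support_mem_ae] with x hx hxμ
  refine tendsto_nhdsGT_of_eventually_tendsto_nhdsLT hx ?_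
  filter_upwards [self_mem_nhdsWithin] with r hr
  exact ENNReal.Tendsto.div (tendsto_measure_closedBall_nhdsLT ρ x r)
    (Or.inr (((nhds_basis_ball.mem_measureSupport).1 hxμ r hr).ne'))
    (tendsto_measure_closedBall_nhdsLT μ x r) (Or.inr measure_ball_lt_top.ne)

theorem exists_tendsto_div_add_of_measure_ball_eq (μ π : Measure X) [IsLocallyFiniteMeasure μ]
    [IsLocallyFiniteMeasure π] {T : Set X} (hμT : μ T ≠ 0) (hπT : π T ≠ 0) {g V : ℝ → ℝ≥0∞}
    (hg : ∀ y ∈ T, ∀ᶠ r in 𝓝[>] 0, μ (ball y r) = g r)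
    (hV : ∀ y ∈ T, ∀ᶠ r in 𝓝[>] 0, π (ball y r) = V r) :
    ∃ K : ℝ≥0∞, 0 < K ∧ K < 1 ∧ Tendsto (fun r => g r / (g r + V r)) (𝓝[>] 0) (𝓝 K) := by
  have hdiff := Besicovitch.ae_tendsto_rnDeriv_ball μ (μ + π)
  have hT : ∀ y ∈ T, Tendsto (fun r => μ (ball y r) / (μ + π) (ball y r)) (𝓝[>] 0)
      (𝓝 (μ.rnDeriv (μ + π) y)) → Tendsto (fun r => g r / (g r + V r)) (𝓝[>] 0)
      (𝓝 (μ.rnDeriv (μ + π) y)) := fun y hy h => h.congr' <| by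
    filter_upwards [hg y hy, hV y hy] with r hgr hVr
    rw [Measure.add_apply, hgr, hVr]
  have hμac : μ ≪ μ + π := Measure.AbsolutelyContinuous.rfl.add_right π
  have hπac : π ≪ μ + π := Measure.AbsolutelyContinuous.rfl.add_right' μ
  have hlt : ∀ᵐ y ∂π, μ.rnDeriv (μ + π) y < 1 := by
    filter_upwards [μ.rnDeriv_self_add π, μ.rnDeriv_lt_top π] with y hy hfin
    rw [hy, ENNReal.div_lt_iff (Or.inl (by simp)) (Or.inl (by simp [hfin.ne])), one_mul]
    exact ENNReal.lt_add_right hfin.ne one_ne_zero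
  obtain ⟨y₁, hy₁T, hy₁, hy₁pos⟩ := Measure.exists_mem_of_measure_ne_zero_of_ae hμT <|
    ae_restrict_of_ae <| Eventually.and (hμac.ae_le hdiff) (Measure.rnDeriv_pos hμac)
  obtain ⟨y₂, hy₂T, hy₂, hy₂lt⟩ := Measure.exists_mem_of_measure_ne_zero_of_ae hπT <|
    ae_restrict_of_ae <| Eventually.and (hπac.ae_le hdiff) hlt
  have hK := hT y₂ hy₂T hy₂
  refine ⟨_, ?_, hy₂lt, hK⟩
  rwa [tendsto_nhds_unique hK (hT y₁ hy₁T hy₁)]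

end Besicovitch

theorem exists_pos_tendsto_toReal_div_of_tendsto_div_add {α : Type*} {l : Filter α}
    {g : α → ℝ≥0∞} {V : α → ℝ} {K : ℝ≥0∞} (hK0 : 0 < K) (hK1 : K < 1)
    (hg : ∀ᶠ x in l, g x ≠ ∞) (hV : ∀ᶠ x in l, 0 < V x)
    (h : Tendsto (fun x => g x / (g x + ENNReal.ofReal (V x))) l (𝓝 K)) :
    ∃ c, 0 < c ∧ Tendsto (fun x => (g x).toReal / V x) l (𝓝 c) := by
  have hκ0 : 0 < K.toReal := ENNReal.toReal_pos hK0.ne' (hK1.trans ENNReal.one_lt_top).ne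
  have hκ1 : K.toReal < 1 := by
    simpa using (ENNReal.toReal_lt_toReal (hK1.trans ENNReal.one_lt_top).ne ENNReal.one_ne_top).2 hK1
  have hreal := (ENNReal.tendsto_toReal (hK1.trans ENNReal.one_lt_top).ne).comp h
  refine ⟨K.toReal / (1 - K.toReal), div_pos hκ0 (sub_pos.2 hκ1),
    (hreal.div (tendsto_const_nhds.sub hreal) (sub_pos.2 hκ1).ne').congr' ?_⟩
  filter_upwards [hg, hV] with x hgx hVx
  simp only [Pi.div_apply, Function.comp_apply]
  rw [ENNReal.toReal_div, ENNReal.toReal_add hgx ENNReal.ofReal_ne_top,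
    ENNReal.toReal_ofReal hVx.le]
  have hpos : 0 < (g x).toReal + V x := by positivity
  rw [one_sub_div hpos.ne', div_div_div_cancel_right₀ hpos.ne', add_sub_cancel_left]

theorem volume_ball_eq_ofReal_unitBallVol_mul {k : ℕ} (x : EuclideanSpace ℝ (Fin k)) {r : ℝ}
    (hr : 0 < r) : volume (ball x r) = ENNReal.ofReal (unitBallVol k * r ^ k) := by
  rw [Measure.addHaar_ball_of_pos _ _ hr, finrank_euclideanSpace_fin, mul_comm,
    ENNReal.ofReal_mul (unitBallVol_pos k).le, unitBallVol, ENNReal.ofReal_toReal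
    measure_ball_lt_top.ne]

theorem msupp_eq_support {X : Type*} [MetricSpace X] [MeasurableSpace X] (μ : Measure X) :
    msupp μ = μ.support := by
  ext x
  exact nhds_basis_ball.mem_measureSupport.symm

theorem measure_inter_msupp {X : Type*} [MetricSpace X] [MeasurableSpace X]
    [SecondCountableTopology X] (μ : Measure X) (s : Set X) : μ (s ∩ msupp μ) = μ s := by
  rw [msupp_eq_support]
  exact measure_inter_conull μ.measure_compl_support

theorem AffineSubspace.exists_isometry_range_eq {E : Type*} [NormedAddCommGroup E]
    [InnerProductSpace ℝ E] (P : AffineSubspace ℝ E) [FiniteDimensional ℝ P.direction] {k : ℕ}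
    (hPk : finrank ℝ P.direction = k) {x : E} (hx : x ∈ P) :
    ∃ f : EuclideanSpace ℝ (Fin k) → E, Isometry f ∧ range f = P := by
  subst hPk
  let e := (stdOrthonormalBasis ℝ P.direction).repr.symm
  refine ⟨fun v => (e v : E) +ᵥ x, (IsometryEquiv.vaddConst x).isometry.comp
    (P.direction.subtypeₗᵢ.isometry.comp e.isometry), ?_⟩
  ext y
  refine ⟨?_, fun hy => ⟨e.symm ⟨y -ᵥ x, P.vsub_mem_direction hy hx⟩, by simp⟩⟩
  rintro ⟨v, rfl⟩
  exact P.vadd_mem_of_mem_direction (e v).2 hx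

theorem Topology.IsClosedEmbedding.isFiniteMeasureOnCompacts_map {X Y : Type*}
    [TopologicalSpace X] [MeasurableSpace X] [BorelSpace X] [TopologicalSpace Y]
    [MeasurableSpace Y] [BorelSpace Y] {f : X → Y} (hf : IsClosedEmbedding f) (μ : Measure X)
    [IsFiniteMeasureOnCompacts μ] : IsFiniteMeasureOnCompacts (μ.map f) where
  lt_top_of_isCompact _ hK := by
    rw [hf.measurableEmbedding.map_apply]
    exact (hf.isCompact_preimage hK).measure_lt_top

theorem AffineSubspace.exists_measure_ball_eq_unitBallVol_mul {E : Type*} [NormedAddCommGroup E]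
    [InnerProductSpace ℝ E] [FiniteDimensional ℝ E] [MeasurableSpace E] [BorelSpace E]
    (P : AffineSubspace ℝ E) {k : ℕ} (hPk : finrank ℝ P.direction = k) {x : E} (hx : x ∈ P) :
    ∃ π : Measure E, IsLocallyFiniteMeasure π ∧ π (P : Set E)ᶜ = 0 ∧
      ∀ y ∈ P, ∀ r, 0 < r → π (ball y r) = ENNReal.ofReal (unitBallVol k * r ^ k) := by
  obtain ⟨f, hf, hfP⟩ := P.exists_isometry_range_eq hPk hx
  have := hf.isClosedEmbedding.isFiniteMeasureOnCompacts_map volume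
  have hmap := hf.isClosedEmbedding.measurableEmbedding.map_apply volume
  refine ⟨volume.map f, inferInstance, ?_, ?_⟩
  · rw [hmap, ← hfP, preimage_compl, preimage_range, compl_univ, measure_empty]
  · rintro z hz r hr
    obtain ⟨y, rfl⟩ : z ∈ range f := hfP ▸ hz
    rw [hmap, hf.preimage_ball, volume_ball_eq_ofReal_unitBallVol_mul y hr]

theorem stmt8_general (n k : ℕ) (μ : Measure (Eu n)) [IsLocallyFiniteMeasure μ]
    (hμ : LocUnifDist n μ) (p : Eu n) (hp : p ∈ msupp μ)
    (z₀ : Eu n) (hz₀ : z₀ ∈ msupp μ) (r₀ : ℝ) (hr₀ : 0 < r₀)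
    (P : AffineSubspace ℝ (Eu n))
    (hPk : finrank ℝ P.direction = k)
    (hflat : ball z₀ r₀ ∩ msupp μ = ball z₀ r₀ ∩ (P : Set (Eu n))) :
    ∃ c : ℝ, 0 < c ∧
      Tendsto (fun r : ℝ => (μ (ball p r)).toReal / (unitBallVol k * r ^ k))
        (𝓝[>] 0) (𝓝 c) := by
  have hω : ∀ r : ℝ, 0 < r → 0 < unitBallVol k * r ^ k :=
    fun r hr => mul_pos (unitBallVol_pos k) (pow_pos hr k)
  have hz₀P : z₀ ∈ P := (hflat ▸ ⟨mem_ball_self hr₀, hz₀⟩ : z₀ ∈ ball z₀ r₀ ∩ P).2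
  obtain ⟨π, _, hπP, hπ⟩ := P.exists_measure_ball_eq_unitBallVol_mul hPk hz₀P
  have hμT : μ (ball z₀ r₀ ∩ P) ≠ 0 := by
    rw [← hflat, measure_inter_msupp]
    exact (hz₀ r₀ hr₀).ne'
  have hπT : π (ball z₀ r₀ ∩ P) ≠ 0 := by
    rw [measure_inter_conull hπP, hπ z₀ hz₀P r₀ hr₀]
    exact (ENNReal.ofReal_pos.2 (hω r₀ hr₀)).ne'
  have hμ_eq : ∀ y ∈ ball z₀ r₀ ∩ P, ∀ᶠ r in 𝓝[>] 0, μ (ball y r) = μ (ball p r) := by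
    intro y hyT
    have hy : y ∈ msupp μ := (hflat.symm ▸ hyT : y ∈ ball z₀ r₀ ∩ msupp μ).2
    filter_upwards [Ioc_mem_nhdsGT one_pos] with r hr
    exact (hμ y hy p hp r hr.1 hr.2).2.1
  obtain ⟨K, hK0, hK1, hK⟩ := exists_tendsto_div_add_of_measure_ball_eq μ π hμT hπT hμ_eq
    fun y hy => eventually_nhdsWithin_of_forall fun r hr => hπ y hy.2 r hr
  exact exists_pos_tendsto_toReal_div_of_tendsto_div_add hK0 hK1
    (Eventually.of_forall fun r => measure_ball_lt_top.ne)
    (eventually_nhdsWithin_of_forall hω) hK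

/-- for a locally uniformly distributed measure that is flat (a `k`-plane)
in some ball, the density `c = lim_{r→0} g(r)/(ω_k r^k)` exists and lies in `(0,∞)`. -/
theorem stmt8 (n k : ℕ) (μ : Measure (Eu n)) [IsLocallyFiniteMeasure μ]
    (hμ : LocUnifDist n μ) (p : Eu n) (hp : p ∈ msupp μ)
    (z₀ : Eu n) (hz₀ : z₀ ∈ msupp μ) (r₀ : ℝ) (hr₀ : 0 < r₀)
    (P : AffineSubspace ℝ (Eu n)) (hPne : (P : Set (Eu n)).Nonempty)
    (hPk : finrank ℝ P.direction = k)
    (hflat : ball z₀ r₀ ∩ msupp μ = ball z₀ r₀ ∩ (P : Set (Eu n))) :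
    ∃ c : ℝ, 0 < c ∧
      Tendsto (fun r : ℝ => (μ (ball p r)).toReal / (unitBallVol k * r ^ k))
        (𝓝[>] 0) (𝓝 c) :=
  stmt8_general n k μ hμ p hp z₀ hz₀ r₀ hr₀ P hPk hflat
end
end
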